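/- A morphism vanishes in the Verdier quotient if and only if it factors through the thick subcategory: for a morphism f : A → B in T, the image L(f) of f under the localization functor L : T ⥤ T/W is zero if and only if there exist an object E of E and morphisms g : A → E, h : E → B with f = h ∘ g. -/

import Mathlib

open CategoryTheory Category Limits Pretriangulated Triangulated

namespace CategoryTheory.Triangulated

variable {C : Type*} [Category C] [HasZeroObject C] [HasShift C ℤ]
  [Preadditive C] [∀ n : ℤ, (shiftFunctor C n).Additive] [Pretriangulated C]

variable (C) in
/-- The structure `Triangulated.Subcategory` as it stood in Mathlib (December 2024). -/
structure Subcategory where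
  P : C → Prop
  zero' : ∃ (Z : C) (_ : IsZero Z), P Z
  shift (X : C) (n : ℤ) : P X → P (X⟦n⟧)
  ext₂' (T : Triangle C) (_ : T ∈ distTriang C) : P T.obj₁ → P T.obj₃ →
    ObjectProperty.isoClosure P T.obj₂

namespace Subcategory

variable (S : Subcategory C)

instance isTriangulated_P : ObjectProperty.IsTriangulated S.P where
  exists_zero := by
    obtain ⟨Z, hZ, h⟩ := S.zero'
    exact ⟨Z, hZ, h⟩
  isStableUnderShiftBy a := ⟨fun X hX => S.shift X a hX⟩
  ext₂' := S.ext₂'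

/-- The class of morphisms whose cone satisfies `S.P` (old `Subcategory.W`). -/
def W : MorphismProperty C := ObjectProperty.trW S.P

instance instHasLeftCalculusOfFractionsW [IsTriangulated C] :
    S.W.HasLeftCalculusOfFractions := by
  unfold W
  infer_instance

end Subcategory

end CategoryTheory.Triangulated

/-! By the left calculus of fractions, `L f = 0` exactly when `f ≫ s = 0` for some weak
equivalence `s : B ⟶ Z`. Completing `s` to a distinguished triangle `X ⟶ B ⟶ Z ⟶ X⟦1⟧`
with `X` in `E`, a morphism killed by `s` is one that factors through `X ⟶ B`; conversely,
if `f` factors through `X ∈ E` via `h : X ⟶ B`, the cone `B ⟶ Z` of `h` is a weak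
equivalence killing `f`. -/

namespace CategoryTheory

lemma MorphismProperty.map_eq_zero_iff_postcomp {C D : Type*} [Category C] [Category D]
    [HasZeroMorphisms C] [HasZeroMorphisms D] (L : C ⥤ D) (W : MorphismProperty C)
    [L.IsLocalization W] [W.HasLeftCalculusOfFractions] [L.PreservesZeroMorphisms]
    {X Y : C} (f : X ⟶ Y) :
    L.map f = 0 ↔ ∃ (Z : C) (s : Y ⟶ Z) (_ : W s), f ≫ s = 0 := by
  simp only [← L.map_zero, MorphismProperty.map_eq_iff_postcomp L W, zero_comp]

variable {C : Type*} [Category C] [HasZeroObject C] [HasShift C ℤ]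
  [Preadditive C] [∀ n : ℤ, (shiftFunctor C n).Additive] [Pretriangulated C]

lemma ObjectProperty.exists_trW_comp_eq_zero_iff (P : ObjectProperty C) [P.IsStableUnderShift ℤ]
    {A B : C} (f : A ⟶ B) :
    (∃ (Z : C) (s : B ⟶ Z) (_ : P.trW s), f ≫ s = 0) ↔
      ∃ (X : C) (_ : P X) (g : A ⟶ X) (h : X ⟶ B), f = g ≫ h := by
  constructor
  · rintro ⟨Z, s, hs, hfs⟩
    obtain ⟨X, i, δ, hT, hX⟩ := (P.trW_iff' s).1 hs
    obtain ⟨g, hg⟩ := Triangle.coyoneda_exact₂ _ hT f hfs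
    exact ⟨X, hX, g, i, hg⟩
  · rintro ⟨X, hX, g, h, rfl⟩
    obtain ⟨Z, s, δ, hT⟩ := distinguished_cocone_triangle h
    exact ⟨Z, s, trW.mk' P hT hX, by
      rw [assoc, show h ≫ s = 0 from comp_distTriang_mor_zero₁₂ _ hT, comp_zero]⟩

end CategoryTheory

/-- **A morphism vanishes in the Verdier quotient if and only if it factors
through the thick subcategory.**  For a morphism `f : A ⟶ B` in a triangulated
category `T` with thick subcategory `E`, the image of `f` under the
localization functor `L = E.W.Q : T ⥤ T/W` at the class `W` of `E`-weak
equivalences is zero if and only if there are an object `X` of `E` and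
morphisms `g : A ⟶ X`, `h : X ⟶ B` with `f = g ≫ h`. -/
theorem map_eq_zero_iff_factors {T : Type*} [Category T] [HasZeroObject T] [Preadditive T]
    [HasShift T ℤ] [∀ n : ℤ, (shiftFunctor T n).Additive] [Pretriangulated T]
    [IsTriangulated T] (E : Triangulated.Subcategory T) [ObjectProperty.IsClosedUnderIsomorphisms E.P]
    (hthick : ∀ ⦃X Y : T⦄ (i : X ⟶ Y) (r : Y ⟶ X), i ≫ r = 𝟙 X → E.P Y → E.P X)
    {A B : T} (f : A ⟶ B) :
    E.W.Q.map f = 0 ↔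
      ∃ (X : T) (_ : E.P X) (g : A ⟶ X) (h : X ⟶ B), f = g ≫ h := by
  have : E.W.Q.IsLocalization (ObjectProperty.trW E.P) := inferInstanceAs (E.W.Q.IsLocalization E.W)
  rw [MorphismProperty.map_eq_zero_iff_postcomp E.W.Q (ObjectProperty.trW E.P),
    ObjectProperty.exists_trW_comp_eq_zero_iff]
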